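/- Let (Y, δ) be a represented space, i.e. Y is a set and δ is a partial surjection from Baire space onto Y. Let f be a partial multivalued function from subsets of ℕ to Y (f : Set ℕ → Set Y, with U ∈ dom f iff f U ≠ ∅), where a name of the input U ⊆ ℕ is any p : ℕ → ℕ enumerating U. Assume ℕ ∈ dom f and that f is nowhere continuous: for every finite set A ⊆ ℕ there is no continuous function G, defined on {p | p enumerates some U ∈ dom f with A ⊆ U}, such that G p is a δ-name of an element of f U whenever p enumerates U. Then f is not topologically Weihrauch reducible to C_ℕ: there do not exist continuous functions K and H such that for every p enumerating some U ∈ dom f, K p enumerates ℕ ∖ S for some nonempty S ⊆ ℕ, and H (p, n) is a δ-name of an element of f U for every n ∈ S. -/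

import Mathlib

/-!
Let `K`, `H` reduce `f` to `C_ℕ` and fix `i`. The names `p` of points of `dom f` for which `K p`
enumerates `i`, i.e. `i ∉ S p`, are dense: if a cylinder with prefix `σ` missed them, then
`p ↦ H (σ⌢p, i)` would be a continuous realizer of `f` on the inputs containing the finite set
enumerated by `σ`. Continuity of `K` makes this set relatively open among the names of `dom f`,
so the Baire category theorem (applied together with the dense open sets of sequences that
enumerate `i`) gives a name `z` of `ℕ` for which `K z` enumerates every `i`. Then `S z = ∅`,
although `ℕ ∈ dom f`.
-/

/-- `p` enumerates `S` if `S = {n | ∃ k, p k = n + 1}`. -/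
def Enumerates (p : ℕ → ℕ) (S : Set ℕ) : Prop := S = {n | ∃ k, p k = n + 1}

open PiNat Set Function

section Cylinders

variable {α : Type*} [TopologicalSpace α] [DiscreteTopology α]

lemma dense_of_forall_inter_cylinder_nonempty {s : Set (ℕ → α)}
    (h : ∀ x n, (cylinder x n ∩ s).Nonempty) : Dense s :=
  (isTopologicalBasis_cylinders fun _ => α).dense_iff.2 fun _ ⟨x, n, ho⟩ _ => ho ▸ h x n

lemma isOpen_setOf_exists_apply_eq (a : α) : IsOpen {g : ℕ → α | ∃ k, g k = a} := by
  rw [ofPred_exists]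
  exact isOpen_iUnion fun k => (isOpen_discrete {a}).preimage (f := fun g : ℕ → α => g k)
    (continuous_apply k)

lemma dense_setOf_exists_apply_eq (a : α) : Dense {g : ℕ → α | ∃ k, g k = a} :=
  dense_of_forall_inter_cylinder_nonempty fun x n =>
    ⟨update x n a, update_mem_cylinder x n a, n, update_self n a x⟩

end Cylinders

lemma ContinuousOn.exists_isOpen_dense_inter_subset_preimage {X Z : Type*} [TopologicalSpace X]
    [TopologicalSpace Z] {g : X → Z} {D : Set X} {t : Set Z} (hg : ContinuousOn g D)
    (ht : IsOpen t) (hdense : Dense (g ⁻¹' t ∩ D)) :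
    ∃ u, IsOpen u ∧ Dense u ∧ u ∩ D ⊆ g ⁻¹' t := by
  obtain ⟨u, hu, heq⟩ := continuousOn_iff'.1 hg t ht
  rw [heq] at hdense
  exact ⟨u, hu, hdense.mono inter_subset_left, heq ▸ inter_subset_left⟩

section Splice

variable {α : Type*}

def splice (x : ℕ → α) (n : ℕ) (p : ℕ → α) : ℕ → α :=
  fun j => if j < n then x j else p (j - n)

lemma splice_mem_cylinder (x : ℕ → α) (n : ℕ) (p : ℕ → α) : splice x n p ∈ cylinder x n :=
  fun _ hj => if_pos hj

lemma continuous_splice [TopologicalSpace α] (x : ℕ → α) (n : ℕ) : Continuous (splice x n) :=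
  continuous_pi fun j => by
    by_cases hj : j < n
    · simpa only [splice, hj, if_true] using continuous_const
    · simpa only [splice, hj, if_false] using continuous_apply (j - n)

end Splice

lemma Enumerates.mem_iff {p : ℕ → ℕ} {U : Set ℕ} (h : Enumerates p U) {m : ℕ} :
    m ∈ U ↔ ∃ k, p k = m + 1 :=
  h ▸ Iff.rfl

noncomputable def enumeratedBefore (x : ℕ → ℕ) (n : ℕ) : Finset ℕ :=
  ((Finset.range n).image x).preimage (· + 1) (add_left_injective 1).injOn

lemma mem_enumeratedBefore {x : ℕ → ℕ} {n m : ℕ} :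
    m ∈ enumeratedBefore x n ↔ ∃ j < n, x j = m + 1 := by
  simp [enumeratedBefore]

lemma enumerates_splice {p : ℕ → ℕ} {U : Set ℕ} (h : Enumerates p U) (x : ℕ → ℕ) (n : ℕ) :
    Enumerates (splice x n p) (↑(enumeratedBefore x n) ∪ U) := by
  ext m
  rw [mem_union, Finset.mem_coe, mem_enumeratedBefore, h.mem_iff]
  show _ ↔ ∃ k, splice x n p k = m + 1
  constructor
  · rintro (⟨j, hj, hxj⟩ | ⟨k, hpk⟩)
    · exact ⟨j, by rwa [splice, if_pos hj]⟩
    · exact ⟨k + n, by rwa [splice, if_neg (by omega), Nat.add_sub_cancel]⟩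
  · rintro ⟨k, hk⟩
    by_cases hkn : k < n
    · exact Or.inl ⟨k, hkn, by rwa [splice, if_pos hkn] at hk⟩
    · exact Or.inr ⟨k - n, by rwa [splice, if_neg hkn] at hk⟩

section Reduction

variable {Y : Type*} {δ : (ℕ → ℕ) → Option Y} {f : Set ℕ → Set Y}

def domNames (f : Set ℕ → Set Y) : Set (ℕ → ℕ) :=
  {p | ∃ U : Set ℕ, (f U).Nonempty ∧ Enumerates p U}

def HasContinuousRealizerAbove (δ : (ℕ → ℕ) → Option Y) (f : Set ℕ → Set Y) (A : Finset ℕ) :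
    Prop :=
  ∃ G : (ℕ → ℕ) → (ℕ → ℕ),
    ContinuousOn G {p | ∃ U : Set ℕ, (f U).Nonempty ∧ ↑A ⊆ U ∧ Enumerates p U} ∧
    ∀ (p : ℕ → ℕ) (U : Set ℕ), (f U).Nonempty → ↑A ⊆ U → Enumerates p U →
      ∃ y ∈ f U, δ (G p) = some y

variable {K : (ℕ → ℕ) → (ℕ → ℕ)} {S : (ℕ → ℕ) → Set ℕ} {H : (ℕ → ℕ) × ℕ → (ℕ → ℕ)}

theorem hasContinuousRealizerAbove_of_forall_mem_cylinder
    (hH : ContinuousOn H {q : (ℕ → ℕ) × ℕ | q.1 ∈ domNames f ∧ q.2 ∈ S q.1})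
    (hsol : ∀ (p : ℕ → ℕ) (U : Set ℕ), (f U).Nonempty → Enumerates p U →
      ∀ n ∈ S p, ∃ y ∈ f U, δ (H (p, n)) = some y)
    (x : ℕ → ℕ) (n i : ℕ) (hi : ∀ q ∈ domNames f ∩ cylinder x n, i ∈ S q) :
    HasContinuousRealizerAbove δ f (enumeratedBefore x n) := by
  have hspliced : ∀ (p : ℕ → ℕ) (U : Set ℕ), (f U).Nonempty → ↑(enumeratedBefore x n) ⊆ U →
      Enumerates p U → Enumerates (splice x n p) U ∧ i ∈ S (splice x n p) := by
    intro p U hU hA hp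
    have hsp : Enumerates (splice x n p) U :=
      union_eq_self_of_subset_left hA ▸ enumerates_splice hp x n
    exact ⟨hsp, hi _ ⟨⟨U, hU, hsp⟩, splice_mem_cylinder x n p⟩⟩
  refine ⟨fun p => H (splice x n p, i),
    hH.comp ((continuous_splice x n).prodMk continuous_const).continuousOn ?_,
    fun p U hU hA hp => hsol _ U hU (hspliced p U hU hA hp).1 i (hspliced p U hU hA hp).2⟩
  rintro p ⟨U, hU, hA, hp⟩
  exact ⟨⟨U, hU, (hspliced p U hU hA hp).1⟩, (hspliced p U hU hA hp).2⟩

theorem dense_preimage_setOf_exists_apply_eq_inter_domNames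
    (hnc : ∀ A, ¬ HasContinuousRealizerAbove δ f A)
    (hH : ContinuousOn H {q : (ℕ → ℕ) × ℕ | q.1 ∈ domNames f ∧ q.2 ∈ S q.1})
    (hK : ∀ (p : ℕ → ℕ) (U : Set ℕ), (f U).Nonempty → Enumerates p U →
      Enumerates (K p) (S p)ᶜ)
    (hsol : ∀ (p : ℕ → ℕ) (U : Set ℕ), (f U).Nonempty → Enumerates p U →
      ∀ n ∈ S p, ∃ y ∈ f U, δ (H (p, n)) = some y) (i : ℕ) :
    Dense (K ⁻¹' {g | ∃ k, g k = i + 1} ∩ domNames f) := by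
  refine dense_of_forall_inter_cylinder_nonempty fun x n => ?_
  by_contra hempty
  refine hnc _ (hasContinuousRealizerAbove_of_forall_mem_cylinder hH hsol x n i fun q hq => ?_)
  obtain ⟨⟨U, hU, hqU⟩, hqx⟩ := hq
  by_contra hiS
  exact hempty ⟨q, hqx, (hK q U hU hqU).mem_iff.1 hiS, U, hU, hqU⟩

end Reduction

theorem not_reducible_to_CNat_of_nowhere_continuous
    {Y : Type*} (δ : (ℕ → ℕ) → Option Y)
    (f : Set ℕ → Set Y)
    (hdom : (f Set.univ).Nonempty)
    (hnc : ∀ A : Finset ℕ,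
      ¬ ∃ G : (ℕ → ℕ) → (ℕ → ℕ),
        ContinuousOn G {p | ∃ U : Set ℕ, (f U).Nonempty ∧ ↑A ⊆ U ∧ Enumerates p U} ∧
        ∀ (p : ℕ → ℕ) (U : Set ℕ), (f U).Nonempty → ↑A ⊆ U → Enumerates p U →
          ∃ y ∈ f U, δ (G p) = some y) :
    ¬ ∃ (K : (ℕ → ℕ) → (ℕ → ℕ)) (S : (ℕ → ℕ) → Set ℕ) (H : (ℕ → ℕ) × ℕ → (ℕ → ℕ)),
      ContinuousOn K {p | ∃ U : Set ℕ, (f U).Nonempty ∧ Enumerates p U} ∧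
      ContinuousOn H {q : (ℕ → ℕ) × ℕ |
        (∃ U : Set ℕ, (f U).Nonempty ∧ Enumerates q.1 U) ∧ q.2 ∈ S q.1} ∧
      ∀ (p : ℕ → ℕ) (U : Set ℕ), (f U).Nonempty → Enumerates p U →
        (S p).Nonempty ∧ Enumerates (K p) (S p)ᶜ ∧
          ∀ n ∈ S p, ∃ y ∈ f U, δ (H (p, n)) = some y := by
  rintro ⟨K, S, H, hK, hH, hred⟩
  choose u hu_open hu_dense hu_forced using fun i =>
    hK.exists_isOpen_dense_inter_subset_preimage (isOpen_setOf_exists_apply_eq (i + 1))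
      (dense_preimage_setOf_exists_apply_eq_inter_domNames hnc hH
        (fun p U hU hp => (hred p U hU hp).2.1) (fun p U hU hp => (hred p U hU hp).2.2) i)
  obtain ⟨z, hz⟩ := (dense_iInter_of_isOpen_nat
    (fun i => (hu_open i).inter (isOpen_setOf_exists_apply_eq (i + 1)))
    (fun i => (hu_dense i).inter_of_isOpen_left (dense_setOf_exists_apply_eq (i + 1))
      (hu_open i))).nonempty
  rw [mem_iInter] at hz
  have hz_univ : Enumerates z univ := (eq_univ_of_forall fun i => (hz i).2).symm
  obtain ⟨⟨i, hi⟩, hKz, -⟩ := hred z univ hdom hz_univ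
  exact hKz.mem_iff.2 (hu_forced i ⟨(hz i).1, univ, hdom, hz_univ⟩) hi
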